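/- arXiv:2504.12212 — 10 statements merged into one kernel-verified Lean document; each statement's English description precedes it below -/
import Mathlib

section
/- The map Q_I is 3D-compatible: let K be a field, P₁, P₂, P₃ ∈ K, and x, y, z ∈ K with x ≠ y, x ≠ z, y ≠ z. With f(a,b;α,β) = (α−β)a/(a−b) and g(a,b;α,β) = (α−β)b/(a−b), set x₂ = f(x,y;P₁,P₂), y₁ = g(x,y;P₁,P₂), x₃ = f(x,z;P₁,P₃), z₁ = g(x,z;P₁,P₃), y₃ = f(y,z;P₂,P₃), z₂ = g(y,z;P₂,P₃). If moreover x₃ ≠ y₃, x₂ ≠ z₂ and y₁ ≠ z₁, then f(x₃,y₃;P₁,P₂) = f(x₂,z₂;P₁,P₃), g(x₃,y₃;P₁,P₂) = f(y₁,z₁;P₂,P₃), and g(x₂,z₂;P₁,P₃) = g(y₁,z₁;P₂,P₃). -/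
/-- First component of the map `Q_I`: `f(x,y;a,b) = (a-b)·x/(x-y)`. -/
def QIf {K : Type*} [Field K] (a b x y : K) : K := (a - b) * x / (x - y)

/-- Second component of the map `Q_I`: `g(x,y;a,b) = (a-b)·y/(x-y)`. -/
def QIg {K : Type*} [Field K] (a b x y : K) : K := (a - b) * y / (x - y)


lemma QIf_div {K : Type*} [Field K] (a b p q r s : K) (hq : q ≠ 0) (hs : s ≠ 0) :
    QIf a b (p / q) (r / s) = (a - b) * (p * s) / (p * s - q * r) := by
  unfold QIf
  rw [div_sub_div _ _ hq hs, div_div_eq_mul_div]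
  rcases eq_or_ne (p * s - q * r) 0 with h | h
  · simp [h]
  · rw [div_eq_div_iff h h]
    field_simp

lemma QIg_div {K : Type*} [Field K] (a b p q r s : K) (hq : q ≠ 0) (hs : s ≠ 0) :
    QIg a b (p / q) (r / s) = (a - b) * (r * q) / (p * s - q * r) := by
  unfold QIg
  rw [div_sub_div _ _ hq hs, div_div_eq_mul_div]
  rcases eq_or_ne (p * s - q * r) 0 with h | h
  · simp [h]
  · rw [div_eq_div_iff h h]
    field_simp

/-- The map `Q_I` is 3D-compatible. -/
theorem QI_3D_compatible {K : Type*} [Field K] (P₁ P₂ P₃ : K)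
    (x y z : K) (hxy : x ≠ y) (hxz : x ≠ z) (hyz : y ≠ z)
    (h1 : QIf P₁ P₃ x z ≠ QIf P₂ P₃ y z)
    (h2 : QIf P₁ P₂ x y ≠ QIg P₂ P₃ y z)
    (h3 : QIg P₁ P₂ x y ≠ QIg P₁ P₃ x z) :
    QIf P₁ P₂ (QIf P₁ P₃ x z) (QIf P₂ P₃ y z)
      = QIf P₁ P₃ (QIf P₁ P₂ x y) (QIg P₂ P₃ y z) ∧
    QIg P₁ P₂ (QIf P₁ P₃ x z) (QIf P₂ P₃ y z)
      = QIf P₂ P₃ (QIg P₁ P₂ x y) (QIg P₁ P₃ x z) ∧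
    QIg P₁ P₃ (QIf P₁ P₂ x y) (QIg P₂ P₃ y z)
      = QIg P₂ P₃ (QIg P₁ P₂ x y) (QIg P₁ P₃ x z) := by
  have hxy' : x - y ≠ 0 := sub_ne_zero.mpr hxy
  have hxz' : x - z ≠ 0 := sub_ne_zero.mpr hxz
  have hyz' : y - z ≠ 0 := sub_ne_zero.mpr hyz
  have h1' : (P₁ - P₃) * x * (y - z) - (x - z) * ((P₂ - P₃) * y) ≠ 0 := by
    have := sub_ne_zero.mpr h1
    rw [QIf, QIf, div_sub_div _ _ hxz' hyz', div_ne_zero_iff] at this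
    exact this.1
  have h2' : (P₁ - P₂) * x * (y - z) - (x - y) * ((P₂ - P₃) * z) ≠ 0 := by
    have := sub_ne_zero.mpr h2
    rw [QIf, QIg, div_sub_div _ _ hxy' hyz', div_ne_zero_iff] at this
    exact this.1
  have h3' : (P₁ - P₂) * y * (x - z) - (x - y) * ((P₁ - P₃) * z) ≠ 0 := by
    have := sub_ne_zero.mpr h3
    rw [QIg, QIg, div_sub_div _ _ hxy' hxz', div_ne_zero_iff] at this
    exact this.1
  have e1 : QIf P₁ P₃ x z = ((P₁ - P₃) * x) / (x - z) := rfl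
  have e2 : QIf P₂ P₃ y z = ((P₂ - P₃) * y) / (y - z) := rfl
  have e3 : QIf P₁ P₂ x y = ((P₁ - P₂) * x) / (x - y) := rfl
  have e4 : QIg P₂ P₃ y z = ((P₂ - P₃) * z) / (y - z) := rfl
  have e5 : QIg P₁ P₂ x y = ((P₁ - P₂) * y) / (x - y) := rfl
  have e6 : QIg P₁ P₃ x z = ((P₁ - P₃) * z) / (x - z) := rfl
  refine ⟨?_, ?_, ?_⟩
  · rw [e1, e2, e3, e4, QIf_div _ _ _ _ _ _ hxz' hyz', QIf_div _ _ _ _ _ _ hxy' hyz',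
      div_eq_div_iff h1' h2']
    ring
  · rw [e1, e2, e5, e6, QIg_div _ _ _ _ _ _ hxz' hyz', QIf_div _ _ _ _ _ _ hxy' hxz',
      div_eq_div_iff h1' h3']
    ring
  · rw [e3, e4, e5, e6, QIg_div _ _ _ _ _ _ hxy' hyz', QIg_div _ _ _ _ _ _ hxy' hxz',
      div_eq_div_iff h2' h3']
    ring
end

section
/- The map Q_II is 3D-compatible: let K be a field and (p₁,P₁), (p₂,P₂), (p₃,P₃) ∈ K × K with p₁, p₂, p₃ pairwise distinct. With f(a,b;(α,A),(β,B)) = (β(a−b)+B−A)/(β−α) and g(a,b;(α,A),(β,B)) = (α(a−b)+B−A)/(β−α), set x₂ = f(x,y;(p₁,P₁),(p₂,P₂)), y₁ = g(x,y;(p₁,P₁),(p₂,P₂)), x₃ = f(x,z;(p₁,P₁),(p₃,P₃)), z₁ = g(x,z;(p₁,P₁),(p₃,P₃)), y₃ = f(y,z;(p₂,P₂),(p₃,P₃)), z₂ = g(y,z;(p₂,P₂),(p₃,P₃)). Then for all x, y, z ∈ K: f(x₃,y₃;(p₁,P₁),(p₂,P₂)) = f(x₂,z₂;(p₁,P₁),(p₃,P₃)),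 g(x₃,y₃;(p₁,P₁),(p₂,P₂)) = f(y₁,z₁;(p₂,P₂),(p₃,P₃)), and g(x₂,z₂;(p₁,P₁),(p₃,P₃)) = g(y₁,z₁;(p₂,P₂),(p₃,P₃)). -/
/-- First component of the map `Q_II`: `f(x,y;(p,P),(q,Q)) = (q(x-y)+Q-P)/(q-p)`. -/
def QIIf {K : Type*} [Field K] (p P q Q x y : K) : K := (q * (x - y) + Q - P) / (q - p)

/-- Second component of the map `Q_II`: `g(x,y;(p,P),(q,Q)) = (p(x-y)+Q-P)/(q-p)`. -/
def QIIg {K : Type*} [Field K] (p P q Q x y : K) : K := (p * (x - y) + Q - P) / (q - p)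

/-- The map `Q_II` is 3D-compatible. -/
theorem QII_3D_compatible {K : Type*} [Field K] (p₁ P₁ p₂ P₂ p₃ P₃ : K)
    (h12 : p₁ ≠ p₂) (h13 : p₁ ≠ p₃) (h23 : p₂ ≠ p₃) (x y z : K) :
    QIIf p₁ P₁ p₂ P₂ (QIIf p₁ P₁ p₃ P₃ x z) (QIIf p₂ P₂ p₃ P₃ y z)
      = QIIf p₁ P₁ p₃ P₃ (QIIf p₁ P₁ p₂ P₂ x y) (QIIg p₂ P₂ p₃ P₃ y z) ∧
    QIIg p₁ P₁ p₂ P₂ (QIIf p₁ P₁ p₃ P₃ x z) (QIIf p₂ P₂ p₃ P₃ y z)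
      = QIIf p₂ P₂ p₃ P₃ (QIIg p₁ P₁ p₂ P₂ x y) (QIIg p₁ P₁ p₃ P₃ x z) ∧
    QIIg p₁ P₁ p₃ P₃ (QIIf p₁ P₁ p₂ P₂ x y) (QIIg p₂ P₂ p₃ P₃ y z)
      = QIIg p₂ P₂ p₃ P₃ (QIIg p₁ P₁ p₂ P₂ x y) (QIIg p₁ P₁ p₃ P₃ x z) := by
  have h12' : p₂ - p₁ ≠ 0 := sub_ne_zero.mpr (Ne.symm h12)
  have h13' : p₃ - p₁ ≠ 0 := sub_ne_zero.mpr (Ne.symm h13)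
  have h23' : p₃ - p₂ ≠ 0 := sub_ne_zero.mpr (Ne.symm h23)
  refine ⟨?_, ?_, ?_⟩ <;> simp only [QIIf, QIIg] <;> field_simp <;> ring
end

section
/- The map Q_III is 3D-compatible: let K be a field and p₁, p₂, p₃ ∈ K pairwise distinct. With f(a,b;α,β) = β(a−b)/(β−α) and g(a,b;α,β) = α(a−b)/(β−α), set x₂ = f(x,y;p₁,p₂), y₁ = g(x,y;p₁,p₂), x₃ = f(x,z;p₁,p₃), z₁ = g(x,z;p₁,p₃), y₃ = f(y,z;p₂,p₃), z₂ = g(y,z;p₂,p₃). Then for all x, y, z ∈ K: f(x₃,y₃;p₁,p₂) = f(x₂,z₂;p₁,p₃), g(x₃,y₃;p₁,p₂) = f(y₁,z₁;p₂,p₃), and g(x₂,z₂;p₁,p₃) = g(y₁,z₁;p₂,p₃). -/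
/-- First component of the map `Q_III`: `f(x,y;p,q) = q(x-y)/(q-p)`. -/
def QIIIf {K : Type*} [Field K] (p q x y : K) : K := q * (x - y) / (q - p)

/-- Second component of the map `Q_III`: `g(x,y;p,q) = p(x-y)/(q-p)`. -/
def QIIIg {K : Type*} [Field K] (p q x y : K) : K := p * (x - y) / (q - p)

/-- The map `Q_III` is 3D-compatible. -/
theorem QIII_3D_compatible {K : Type*} [Field K] (p₁ p₂ p₃ : K)
    (h12 : p₁ ≠ p₂) (h13 : p₁ ≠ p₃) (h23 : p₂ ≠ p₃) (x y z : K) :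
    QIIIf p₁ p₂ (QIIIf p₁ p₃ x z) (QIIIf p₂ p₃ y z)
      = QIIIf p₁ p₃ (QIIIf p₁ p₂ x y) (QIIIg p₂ p₃ y z) ∧
    QIIIg p₁ p₂ (QIIIf p₁ p₃ x z) (QIIIf p₂ p₃ y z)
      = QIIIf p₂ p₃ (QIIIg p₁ p₂ x y) (QIIIg p₁ p₃ x z) ∧
    QIIIg p₁ p₃ (QIIIf p₁ p₂ x y) (QIIIg p₂ p₃ y z)
      = QIIIg p₂ p₃ (QIIIg p₁ p₂ x y) (QIIIg p₁ p₃ x z) := by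
  have d12 : p₂ - p₁ ≠ 0 := sub_ne_zero.mpr h12.symm
  have d13 : p₃ - p₁ ≠ 0 := sub_ne_zero.mpr h13.symm
  have d23 : p₃ - p₂ ≠ 0 := sub_ne_zero.mpr h23.symm
  refine ⟨?_, ?_, ?_⟩ <;> simp only [QIIIf, QIIIg] <;> field_simp <;> ring
end

section
/- The map R_I is a parametric Yang–Baxter map: let K be a field and P₁, P₂, P₃ ∈ K. For all x, y, z ∈ K such that every denominator occurring in either side below is nonzero (namely, in each of the six successive applications of R_I the first argument u of the application satisfies u + β − α ≠ 0 for the relevant parameters α, β), one has (R_I)₁₂^{P₁,P₂} ∘ (R_I)₁₃^{P₁,P₃} ∘ (R_I)₂₃^{P₂,P₃}(x,y,z) = (R_I)₂₃^{P₂,P₃} ∘ (R_I)₁₃^{P₁,P₃} ∘ (R_I)₁₂^{P₁,P₂}(x,y,z). -/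
/-- The Yang–Baxter map `R_I^{a,b} : (x,y) ↦ (x·y/(x+b-a), x+b-a)`. -/
def RI {K : Type*} [Field K] (a b : K) (w : K × K) : K × K :=
  (w.1 * w.2 / (w.1 + b - a), w.1 + b - a)

/-- The map acting as `R` on factors 1 and 2 of `X³` and as the identity on factor 3. -/
def act12 {X : Type*} (R : X × X → X × X) (w : X × X × X) : X × X × X :=
  ((R (w.1, w.2.1)).1, (R (w.1, w.2.1)).2, w.2.2)

/-- The map acting as `R` on factors 1 and 3 of `X³` and as the identity on factor 2. -/
def act13 {X : Type*} (R : X × X → X × X) (w : X × X × X) : X × X × X :=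
  ((R (w.1, w.2.2)).1, w.2.1, (R (w.1, w.2.2)).2)

/-- The map acting as `R` on factors 2 and 3 of `X³` and as the identity on factor 1. -/
def act23 {X : Type*} (R : X × X → X × X) (w : X × X × X) : X × X × X :=
  (w.1, (R (w.2.1, w.2.2)).1, (R (w.2.1, w.2.2)).2)

/-- `R_I` is a parametric Yang–Baxter map (wherever the six
successive applications have nonvanishing denominators). -/
theorem RI_YangBaxter {K : Type*} [Field K] (P₁ P₂ P₃ : K) (x y z : K)
    (h1 : y + P₃ - P₂ ≠ 0)
    (h2 : (act23 (RI P₂ P₃) (x, y, z)).1 + P₃ - P₁ ≠ 0)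
    (h3 : (act13 (RI P₁ P₃) (act23 (RI P₂ P₃) (x, y, z))).1 + P₂ - P₁ ≠ 0)
    (h4 : x + P₂ - P₁ ≠ 0)
    (h5 : (act12 (RI P₁ P₂) (x, y, z)).1 + P₃ - P₁ ≠ 0)
    (h6 : (act13 (RI P₁ P₃) (act12 (RI P₁ P₂) (x, y, z))).2.1 + P₃ - P₂ ≠ 0) :
    act12 (RI P₁ P₂) (act13 (RI P₁ P₃) (act23 (RI P₂ P₃) (x, y, z)))
      = act23 (RI P₂ P₃) (act13 (RI P₁ P₃) (act12 (RI P₁ P₂) (x, y, z))) := by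
  simp only [RI, act12, act13, act23] at *
  have h3' : (x * (y + P₃ - P₂) / (x + P₃ - P₁) + P₂ - P₁) * (x + P₃ - P₁) ≠ 0 :=
    mul_ne_zero h3 h2
  have h5' : (x * y / (x + P₂ - P₁) + P₃ - P₁) * (x + P₂ - P₁) ≠ 0 :=
    mul_ne_zero h5 h4
  field_simp at h3' h5'
  refine Prod.ext ?_ (Prod.ext ?_ ?_) <;> field_simp <;> ring_nf
end

section
/- The map R_II is a parametric Yang–Baxter map: let K be a field and (p₁,P₁), (p₂,P₂), (p₃,P₃) ∈ K × K with p₁, p₂, p₃ all nonzero. Then for all x, y, z ∈ K: (R_II)₁₂^{(p₁,P₁),(p₂,P₂)} ∘ (R_II)₁₃^{(p₁,P₁),(p₃,P₃)} ∘ (R_II)₂₃^{(p₂,P₂),(p₃,P₃)}(x,y,z) = (R_II)₂₃^{(p₂,P₂),(p₃,P₃)} ∘ (R_II)₁₃^{(p₁,P₁),(p₃,P₃)} ∘ (R_II)₁₂^{(p₁,P₁),(p₂,P₂)}(x,y,z). -/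
/-- The Yang–Baxter map `R_II^{(p,P),(q,Q)} : (x,y) ↦ (x+y-(px+Q-P)/q, (px+Q-P)/q)`. -/
def RII {K : Type*} [Field K] (p P q Q : K) (w : K × K) : K × K :=
  (w.1 + w.2 - (p * w.1 + Q - P) / q, (p * w.1 + Q - P) / q)

/-- `R_II` is a parametric Yang–Baxter map. -/
theorem RII_YangBaxter {K : Type*} [Field K] (p₁ P₁ p₂ P₂ p₃ P₃ : K)
    (h1 : p₁ ≠ 0) (h2 : p₂ ≠ 0) (h3 : p₃ ≠ 0) (x y z : K) :
    act12 (RII p₁ P₁ p₂ P₂) (act13 (RII p₁ P₁ p₃ P₃) (act23 (RII p₂ P₂ p₃ P₃) (x, y, z)))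
      = act23 (RII p₂ P₂ p₃ P₃) (act13 (RII p₁ P₁ p₃ P₃) (act12 (RII p₁ P₁ p₂ P₂) (x, y, z))) := by
  simp only [act12, act13, act23, RII]
  refine Prod.ext ?_ (Prod.ext ?_ ?_) <;> field_simp <;> ring
end

section
/- The map R_III is a parametric Yang–Baxter map: let K be a field and p₁, p₂, p₃ ∈ K all nonzero. Then for all x, y, z ∈ K: (R_III)₁₂^{p₁,p₂} ∘ (R_III)₁₃^{p₁,p₃} ∘ (R_III)₂₃^{p₂,p₃}(x,y,z) = (R_III)₂₃^{p₂,p₃} ∘ (R_III)₁₃^{p₁,p₃} ∘ (R_III)₁₂^{p₁,p₂}(x,y,z). -/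
/-- The Yang–Baxter map `R_III^{p,q} : (x,y) ↦ (x+y-(p/q)x, (p/q)x)`. -/
def RIII {K : Type*} [Field K] (p q : K) (w : K × K) : K × K :=
  (w.1 + w.2 - (p / q) * w.1, (p / q) * w.1)

/-- `R_III` is a parametric Yang–Baxter map. -/
theorem RIII_YangBaxter {K : Type*} [Field K] (p₁ p₂ p₃ : K)
    (h1 : p₁ ≠ 0) (h2 : p₂ ≠ 0) (h3 : p₃ ≠ 0) (x y z : K) :
    act12 (RIII p₁ p₂) (act13 (RIII p₁ p₃) (act23 (RIII p₂ p₃) (x, y, z)))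
      = act23 (RIII p₂ p₃) (act13 (RIII p₁ p₃) (act12 (RIII p₁ p₂) (x, y, z))) := by
  simp only [act12, act13, act23, RIII, Prod.mk.injEq]
  field_simp
  ring_nf
  refine ⟨?_, ?_, ?_⟩ <;> trivial
end

section
/- (Proposition 2.5, (1)⇔(2)) Let X be a set and let Q : X × X → X × X, Q(x,y) = (f(x,y), g(x,y)), be a bijection whose inverse has component functions F, G : X → X → X, i.e. Q⁻¹(u,v) = (F(u,v), G(u,v)). Then Q is 3D-compatible if and only if Q⁻¹ is 3D-compatible (with respect to its components F, G). -/
/-- A map `(x,y) ↦ (f x y, g x y)` is 3D-compatible: with `x₂ = f x y`, `y₁ = g x y`,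
`x₃ = f x z`, `z₁ = g x z`, `y₃ = f y z`, `z₂ = g y z`, one has
`f x₃ y₃ = f x₂ z₂`, `g x₃ y₃ = f y₁ z₁` and `g x₂ z₂ = g y₁ z₁`. -/
def Is3DCompatible {X : Type*} (f g : X → X → X) : Prop :=
  ∀ x y z : X,
    f (f x z) (f y z) = f (f x y) (g y z) ∧
    g (f x z) (f y z) = f (g x y) (g x z) ∧
    g (f x y) (g y z) = g (g x y) (g x z)

lemma compat_aux {X : Type*} (f g F G : X → X → X)
    (hQ : Function.Bijective (fun w : X × X => (f w.1 w.2, g w.1 w.2)))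
    (hinv : ∀ u v : X, (fun w : X × X => (f w.1 w.2, g w.1 w.2)) (F u v, G u v) = (u, v))
    (hc : Is3DCompatible f g) : Is3DCompatible F G := by
  -- components of hinv
  have hfF : ∀ u v : X, f (F u v) (G u v) = u := fun u v => congrArg Prod.fst (hinv u v)
  have hgF : ∀ u v : X, g (F u v) (G u v) = v := fun u v => congrArg Prod.snd (hinv u v)
  -- left inverse property
  have h1 : ∀ a b : X, F (f a b) (g a b) = a ∧ G (f a b) (g a b) = b := by
    intro a b
    have : ((F (f a b) (g a b), G (f a b) (g a b)) : X × X) = (a, b) := by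
      apply hQ.injective
      show (f (F (f a b) (g a b)) (G (f a b) (g a b)), g (F (f a b) (g a b)) (G (f a b) (g a b)))
        = (f a b, g a b)
      rw [hfF, hgF]
    exact ⟨congrArg Prod.fst this, congrArg Prod.snd this⟩
  -- row injectivity of g
  have rowinj : ∀ x z z' : X, g x z = g x z' → z = z' := by
    intro x z z' h
    have e1 := (hc x x z).1
    have e2 := (hc x x z).2.1
    have e1' := (hc x x z').1
    have e2' := (hc x x z').2.1
    have key : ((f x z, f x z) : X × X) = (f x z', f x z') := by
      apply hQ.injective
      show (f (f x z) (f x z), g (f x z) (f x z)) = (f (f x z') (f x z'), g (f x z') (f x z'))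
      rw [e1, e2, e1', e2', h]
    have hf : f x z = f x z' := congrArg Prod.fst key
    have : ((x, z) : X × X) = (x, z') := by
      apply hQ.injective
      show (f x z, g x z) = (f x z', g x z')
      rw [hf, h]
    exact congrArg Prod.snd this
  -- diagonal identity : g (G v v) (G v v) = v
  have gdiag : ∀ v : X, g (G v v) (G v v) = v := by
    intro v
    have e3 := (hc (F v v) (G v v) (G v v)).2.2
    rw [hfF, hgF] at e3
    exact rowinj v _ v e3
  -- transport identity : g x (g (G x t) (G x t)) = g t t
  have trans : ∀ x t : X, g x (g (G x t) (G x t)) = g t t := by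
    intro x t
    have e3 := (hc (F x t) (G x t) (G x t)).2.2
    rw [hfF, hgF] at e3
    exact e3
  -- row surjectivity of g
  have rowsurj : ∀ x v : X, ∃ y, g x y = v := by
    intro x v
    exact ⟨g (G x (G v v)) (G x (G v v)), by rw [trans x (G v v), gdiag v]⟩
  -- main proof
  intro u v w
  obtain ⟨y, hy⟩ := rowsurj (F (F u v) (G v w)) (F v w)
  set x := F (F u v) (G v w) with hx
  set z := G (F u v) (G v w) with hz
  have hfxz : f x z = F u v := hfF _ _
  have hgxz : g x z = G v w := hgF _ _
  -- step 1 : f y z = G u v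
  have e2 := (hc x y z).2.1
  rw [hfxz, hy, hgxz, hfF] at e2
  -- e2 : g (F u v) (f y z) = v
  have hfyz : f y z = G u v := by
    apply rowinj (F u v)
    rw [e2, hgF]
  -- step 2 : f x y = F u w ∧ g y z = G u w
  have e1 := (hc x y z).1
  rw [hfxz, hfyz, hfF] at e1
  -- e1 : u = f (f x y) (g y z)
  have e3 := (hc x y z).2.2
  rw [hy, hgxz, hgF] at e3
  -- e3 : g (f x y) (g y z) = w
  have key : ((f x y, g y z) : X × X) = (F u w, G u w) := by
    apply hQ.injective
    show (f (f x y) (g y z), g (f x y) (g y z)) = (f (F u w) (G u w), g (F u w) (G u w))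
    rw [← e1, e3, hfF, hgF]
  have hfxy : f x y = F u w := congrArg Prod.fst key
  have hgyz : g y z = G u w := congrArg Prod.snd key
  refine ⟨?_, ?_, ?_⟩
  · -- F (F u w) (F v w) = F (F u v) (G v w)
    rw [← hfxy, ← hy, (h1 x y).1]
  · -- G (F u w) (F v w) = F (G u v) (G u w)
    rw [← hfxy, ← hy, (h1 x y).2, ← hfyz, ← hgyz, (h1 y z).1]
  · -- G (F u v) (G v w) = G (G u v) (G u w)
    rw [← hfyz, ← hgyz, (h1 y z).2]

/-- Proposition 2.5, (1)⇔(2): a bijection `Q(x,y) = (f x y, g x y)`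
with inverse `Q⁻¹(u,v) = (F u v, G u v)` is 3D-compatible iff `Q⁻¹` is 3D-compatible. -/
theorem compat_iff_inverse_compat {X : Type*} (f g F G : X → X → X)
    (hQ : Function.Bijective (fun w : X × X => (f w.1 w.2, g w.1 w.2)))
    (hinv : ∀ u v : X, (fun w : X × X => (f w.1 w.2, g w.1 w.2)) (F u v, G u v) = (u, v)) :
    Is3DCompatible f g ↔ Is3DCompatible F G := by
  have hfF : ∀ u v : X, f (F u v) (G u v) = u := fun u v => congrArg Prod.fst (hinv u v)
  have hgF : ∀ u v : X, g (F u v) (G u v) = v := fun u v => congrArg Prod.snd (hinv u v)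
  have h1 : ∀ a b : X, F (f a b) (g a b) = a ∧ G (f a b) (g a b) = b := by
    intro a b
    have : ((F (f a b) (g a b), G (f a b) (g a b)) : X × X) = (a, b) := by
      apply hQ.injective
      show (f (F (f a b) (g a b)) (G (f a b) (g a b)), g (F (f a b) (g a b)) (G (f a b) (g a b)))
        = (f a b, g a b)
      rw [hfF, hgF]
    exact ⟨congrArg Prod.fst this, congrArg Prod.snd this⟩
  have hQ' : Function.Bijective (fun w : X × X => (F w.1 w.2, G w.1 w.2)) := by
    apply Function.bijective_iff_has_inverse.mpr
    refine ⟨fun w : X × X => (f w.1 w.2, g w.1 w.2), ?_, ?_⟩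
    · intro p
      show (f (F p.1 p.2) (G p.1 p.2), g (F p.1 p.2) (G p.1 p.2)) = p
      rw [hfF, hgF]
    · intro p
      show (F (f p.1 p.2) (g p.1 p.2), G (f p.1 p.2) (g p.1 p.2)) = p
      rw [(h1 p.1 p.2).1, (h1 p.1 p.2).2]
  have hinv' : ∀ u v : X,
      (fun w : X × X => (F w.1 w.2, G w.1 w.2)) (f u v, g u v) = (u, v) := by
    intro u v
    show (F (f u v) (g u v), G (f u v) (g u v)) = (u, v)
    rw [(h1 u v).1, (h1 u v).2]
  exact ⟨compat_aux f g F G hQ hinv, compat_aux F G f g hQ' hinv'⟩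
end

section
/- Linearization of the discrete Burgers equation: let K be a field, P, Q ∈ K, and let χ : ℤ × ℤ → K be nowhere zero and satisfy the linear triangular equation χ(m,n+1) − χ(m+1,n) = (P−Q)·χ(m+1,n+1) for all m, n ∈ ℤ. Define φ : ℤ × ℤ → K by φ(m,n) = χ(m−1,n)/χ(m,n) − P. Then φ satisfies the discrete Burgers equation (φ(m+1,n+1)+P)·(φ(m,n+1)+Q) = (φ(m+1,n+1)+Q)·(φ(m+1,n)+P) for all m, n ∈ ℤ. -/
/-- linearization of the discrete Burgers equation. If the nowhere-zero
function `χ` satisfies the linear triangular equation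
`χ(m,n+1) − χ(m+1,n) = (P−Q)·χ(m+1,n+1)`, then `φ(m,n) = χ(m−1,n)/χ(m,n) − P`
satisfies the discrete Burgers equation. -/
theorem burgers_linearization {K : Type*} [Field K] (P Q : K)
    (χ : ℤ × ℤ → K) (hχ : ∀ m n : ℤ, χ (m, n) ≠ 0)
    (hlin : ∀ m n : ℤ, χ (m, n + 1) - χ (m + 1, n) = (P - Q) * χ (m + 1, n + 1))
    (φ : ℤ × ℤ → K) (hφ : ∀ m n : ℤ, φ (m, n) = χ (m - 1, n) / χ (m, n) - P) :
    ∀ m n : ℤ, (φ (m + 1, n + 1) + P) * (φ (m, n + 1) + Q)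
      = (φ (m + 1, n + 1) + Q) * (φ (m + 1, n) + P) := by
  intro m n
  have h1 := hlin (m - 1) n
  have h2 := hlin m n
  rw [show m - 1 + 1 = m by ring] at h1
  have a1 := hχ (m + 1) (n + 1)
  have a2 := hχ m (n + 1)
  have a3 := hχ (m + 1) n
  rw [hφ, hφ, hφ, add_sub_cancel_right, sub_add_cancel]
  have e1 : χ (m - 1, n + 1) / χ (m, n + 1) - P + Q = χ (m, n) / χ (m, n + 1) := by
    field_simp
    linear_combination h1
  have e2 : χ (m, n + 1) / χ (m + 1, n + 1) - P + Q = χ (m + 1, n) / χ (m + 1, n + 1) := by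
    field_simp
    linear_combination h2
  rw [e1, e2]
  field_simp
  ring
end

section
/- Solutions of the linear triangular equation give solutions of the Q_I edge system via the multiplicative potential: let K be a field, P, Q ∈ K, and let χ : ℤ × ℤ → K be nowhere zero and satisfy χ(m,n+1) − χ(m+1,n) = (P−Q)·χ(m+1,n+1) for all m, n ∈ ℤ. Define x, y : ℤ × ℤ → K by x(m,n) = χ(m,n)/χ(m+1,n) and y(m,n) = χ(m,n)/χ(m,n+1). Then for all m, n ∈ ℤ: x(m,n+1) − P = y(m+1,n) − Q and x(m,n+1)·y(m,n) = y(m+1,n)·x(m,n). -/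
/-- solutions of the linear triangular equation give solutions of the
`Q_I` edge system via the multiplicative potential `x(m,n) = χ(m,n)/χ(m+1,n)`,
`y(m,n) = χ(m,n)/χ(m,n+1)`. -/
theorem linear_to_QI_edge_system {K : Type*} [Field K] (P Q : K)
    (χ : ℤ × ℤ → K) (hχ : ∀ m n : ℤ, χ (m, n) ≠ 0)
    (hlin : ∀ m n : ℤ, χ (m, n + 1) - χ (m + 1, n) = (P - Q) * χ (m + 1, n + 1))
    (x y : ℤ × ℤ → K)
    (hx : ∀ m n : ℤ, x (m, n) = χ (m, n) / χ (m + 1, n))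
    (hy : ∀ m n : ℤ, y (m, n) = χ (m, n) / χ (m, n + 1)) :
    ∀ m n : ℤ, x (m, n + 1) - P = y (m + 1, n) - Q ∧
      x (m, n + 1) * y (m, n) = y (m + 1, n) * x (m, n) := by
  intro m n
  have h1 := hχ (m + 1) (n + 1)
  have h2 := hχ m (n + 1)
  have h3 := hχ (m + 1) n
  have hl := hlin m n
  constructor
  · rw [hx, hy]
    field_simp
    linear_combination hl
  · rw [hx, hy, hy, hx]
    field_simp
end

section
/- Explicit multidimensional compatibility formula for Q_I: let K be a field, P₁, P₂, P₃ ∈ K, and x₁, x₂, x₃ ∈ K pairwise distinct. For i ≠ j set xᵢⱼ = (Pᵢ−Pⱼ)·xᵢ/(xᵢ−xⱼ). Assume x₁₃ ≠ x₂₃, x₁₂ ≠ x₃₂, and D := (P₁−P₂)x₁x₂ − (P₁−P₃)x₁x₃ + (P₂−P₃)x₂x₃ ≠ 0. Then (P₁−P₂)·x₁₃/(x₁₃−x₂₃) = (P₁−P₂)(P₁−P₃)(x₂−x₃)·x₁/D and also (P₁−P₃)·x₁₂/(x₁₂−x₃₂) = (P₁−P₂)(P₁−P₃)(x₂−x₃)·x₁/D;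 in particular the two iterated values x₁_{23} and x₁_{32} coincide. -/
/-- explicit multidimensional compatibility formula for `Q_I`:
the iterated shifts `x₁₂₃` and `x₁₃₂` both equal
`(P₁−P₂)(P₁−P₃)(x₂−x₃)·x₁ / D` where
`D = (P₁−P₂)x₁x₂ − (P₁−P₃)x₁x₃ + (P₂−P₃)x₂x₃`. -/
theorem QI_multidim_compat_formula {K : Type*} [Field K] (P₁ P₂ P₃ : K)
    (x₁ x₂ x₃ : K) (h12 : x₁ ≠ x₂) (h13 : x₁ ≠ x₃) (h23 : x₂ ≠ x₃)
    (x12 x13 x23 x32 : K)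
    (hx12 : x12 = (P₁ - P₂) * x₁ / (x₁ - x₂))
    (hx13 : x13 = (P₁ - P₃) * x₁ / (x₁ - x₃))
    (hx23 : x23 = (P₂ - P₃) * x₂ / (x₂ - x₃))
    (hx32 : x32 = (P₃ - P₂) * x₃ / (x₃ - x₂))
    (h1 : x13 ≠ x23) (h2 : x12 ≠ x32)
    (hD : (P₁ - P₂) * x₁ * x₂ - (P₁ - P₃) * x₁ * x₃ + (P₂ - P₃) * x₂ * x₃ ≠ 0) :
    (P₁ - P₂) * x13 / (x13 - x23)
        = (P₁ - P₂) * (P₁ - P₃) * (x₂ - x₃) * x₁ /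
          ((P₁ - P₂) * x₁ * x₂ - (P₁ - P₃) * x₁ * x₃ + (P₂ - P₃) * x₂ * x₃) ∧
    (P₁ - P₃) * x12 / (x12 - x32)
        = (P₁ - P₂) * (P₁ - P₃) * (x₂ - x₃) * x₁ /
          ((P₁ - P₂) * x₁ * x₂ - (P₁ - P₃) * x₁ * x₃ + (P₂ - P₃) * x₂ * x₃) ∧
    (P₁ - P₂) * x13 / (x13 - x23) = (P₁ - P₃) * x12 / (x12 - x32) := by
  have d12 : x₁ - x₂ ≠ 0 := sub_ne_zero.mpr h12
  have d13 : x₁ - x₃ ≠ 0 := sub_ne_zero.mpr h13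
  have d23 : x₂ - x₃ ≠ 0 := sub_ne_zero.mpr h23
  have d32 : x₃ - x₂ ≠ 0 := sub_ne_zero.mpr h23.symm
  have e1 : x13 - x23 ≠ 0 := sub_ne_zero.mpr h1
  have e2 : x12 - x32 ≠ 0 := sub_ne_zero.mpr h2
  have key1 : (P₁ - P₂) * x13 / (x13 - x23)
      = (P₁ - P₂) * (P₁ - P₃) * (x₂ - x₃) * x₁ /
        ((P₁ - P₂) * x₁ * x₂ - (P₁ - P₃) * x₁ * x₃ + (P₂ - P₃) * x₂ * x₃) := by
    rw [div_eq_div_iff e1 hD]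
    subst hx13 hx23
    field_simp
    ring
  have key2 : (P₁ - P₃) * x12 / (x12 - x32)
      = (P₁ - P₂) * (P₁ - P₃) * (x₂ - x₃) * x₁ /
        ((P₁ - P₂) * x₁ * x₂ - (P₁ - P₃) * x₁ * x₃ + (P₂ - P₃) * x₂ * x₃) := by
    rw [div_eq_div_iff e2 hD]
    subst hx12 hx32
    field_simp
    ring
  exact ⟨key1, key2, key1.trans key2.symm⟩
end
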